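/- arXiv:1612.02783 — 4 statements merged into one kernel-verified Lean document; each statement's English description precedes it below -/
import Mathlib

section
/- Let a, b be positive real numbers. Then the function p ↦ M_p(a,b) is monotone increasing on (0,∞) and the function p ↦ log M_p(a,b) is concave on (0,∞); equivalently, for all p, q > 0, M_{(p+q)/2}(a,b)^2 ≥ M_p(a,b) · M_q(a,b). -/
noncomputable section

open Real

/-- Logarithmic mean: `L(x,y) = (x - y)/(log x - log y)` for `x ≠ y`, `L(x,x) = x`. -/
def logMean (x y : ℝ) : ℝ := if x = y then x else (x - y) / (Real.log x - Real.log y)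

/-- Identric mean: `I(x,y) = (1/e) * (x^x / y^y)^(1/(x-y))` for `x ≠ y`, `I(x,x) = x`. -/
def identricMean (x y : ℝ) : ℝ :=
  if x = y then x else (1 / Real.exp 1) * (x ^ x / y ^ y) ^ (1 / (x - y))

/-- Power mean of order `t`: `M_t(a,b) = ((a^t + b^t)/2)^(1/t)` for `t ≠ 0`, `M_0(a,b) = √(ab)`. -/
def powerMean (t a b : ℝ) : ℝ :=
  if t = 0 then Real.sqrt (a * b) else ((a ^ t + b ^ t) / 2) ^ (1 / t)

/-- Lehmer mean of order `p`: `L_p(a,b) = (a^p + b^p)/(a^(p-1) + b^(p-1))`. -/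
def lehmerMean (p a b : ℝ) : ℝ := (a ^ p + b ^ p) / (a ^ (p - 1) + b ^ (p - 1))

/-- Weighted power mean: `M_p(ω,a,b) = ((a^p + ω b^p)/(1 + ω))^(1/p)`. -/
def wPowerMean (p ω a b : ℝ) : ℝ := ((a ^ p + ω * b ^ p) / (1 + ω)) ^ (1 / p)

/-- Modified Alzer mean: `J_p(a,b) = ((p+1)/p) * (a^(p+1) - b^(p+1))/(a^p - b^p)`. -/
def alzerMean (p a b : ℝ) : ℝ :=
  ((p + 1) / p) * ((a ^ (p + 1) - b ^ (p + 1)) / (a ^ p - b ^ p))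

/-!
Put `F p = log ((a ^ p + b ^ p) / 2)`, so that `log M_p = F p / p` and `F 0 = 0`. Since `F` is
convex, `F p / p`, the slope of the chord of `F` from the origin, increases with `p`.
For concavity, with `x = a ^ p` and `y = b ^ p` one computes
`F''' p = x y (log a - log b) ^ 3 (y - x) / (x + y) ^ 3 ≤ 0` for `p ≥ 0`. Hence
`K p = p ^ 2 F'' p - 2 p F' p + 2 F p`, whose derivative is `p ^ 2 F''' p`, decreases from
`K 0 = 0`, and `(F p / p)'' = K p / p ^ 3 ≤ 0`. The product inequality is log-concavity at the
midpoint of `p` and `q`.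
-/

open Set

section DivSelf

variable {f f₁ f₂ f₃ : ℝ → ℝ}

theorem monotoneOn_div_self_of_convexOn (hf : ConvexOn ℝ (Ici 0) f) (h₀ : f 0 = 0) :
    MonotoneOn (fun x => f x / x) (Ioi 0) := fun x hx y hy hxy => by
  simpa [h₀] using hf.secant_mono self_mem_Ici (mem_Ici.2 (le_of_lt hx))
    (mem_Ici.2 (le_of_lt hy)) (ne_of_gt hx) (ne_of_gt hy) hxy

theorem sq_mul_sub_two_mul_add_two_mul_nonpos (hf : ∀ x, 0 ≤ x → HasDerivAt f (f₁ x) x)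
    (hf₁ : ∀ x, 0 ≤ x → HasDerivAt f₁ (f₂ x) x) (hf₂ : ∀ x, 0 ≤ x → HasDerivAt f₂ (f₃ x) x)
    (h₀ : f 0 = 0) (hf₃ : ∀ x, 0 < x → f₃ x ≤ 0) {x : ℝ} (hx : 0 ≤ x) :
    x ^ 2 * f₂ x - 2 * x * f₁ x + 2 * f x ≤ 0 := by
  set K := fun x => x ^ 2 * f₂ x - 2 * x * f₁ x + 2 * f x
  have hK : ∀ x, 0 ≤ x → HasDerivAt K (x ^ 2 * f₃ x) x := fun x hx => by
    refine ((((hasDerivAt_pow 2 x).mul (hf₂ x hx)).sub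
      (((hasDerivAt_id' x).const_mul 2).mul (hf₁ x hx))).add
      ((hf x hx).const_mul 2)).congr_deriv ?_
    push_cast
    ring
  have hanti : AntitoneOn K (Ici 0) := by
    refine antitoneOn_of_hasDerivWithinAt_nonpos (f' := fun y => y ^ 2 * f₃ y) (convex_Ici 0)
      (fun y hy => (hK y hy).continuousAt.continuousWithinAt) (fun y hy => ?_) (fun y hy => ?_)
    all_goals rw [interior_Ici] at hy
    · exact (hK y (le_of_lt hy)).hasDerivWithinAt
    · exact mul_nonpos_of_nonneg_of_nonpos (sq_nonneg y) (hf₃ y hy)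
  simpa [K, h₀] using hanti self_mem_Ici hx hx

theorem concaveOn_div_self_of_deriv3_nonpos (hf : ∀ x, 0 ≤ x → HasDerivAt f (f₁ x) x)
    (hf₁ : ∀ x, 0 ≤ x → HasDerivAt f₁ (f₂ x) x) (hf₂ : ∀ x, 0 ≤ x → HasDerivAt f₂ (f₃ x) x)
    (h₀ : f 0 = 0) (hf₃ : ∀ x, 0 < x → f₃ x ≤ 0) :
    ConcaveOn ℝ (Ioi 0) (fun x => f x / x) := by
  have hdiv : ∀ x, 0 < x → HasDerivAt (fun x => f x / x) ((x * f₁ x - f x) / x ^ 2) x :=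
    fun x hx => ((hf x hx.le).div (hasDerivAt_id' x) hx.ne').congr_deriv (by ring)
  have hdiv' : ∀ x, 0 < x → HasDerivAt (fun x => (x * f₁ x - f x) / x ^ 2)
      ((x ^ 2 * f₂ x - 2 * x * f₁ x + 2 * f x) / x ^ 3) x := fun x hx => by
    refine ((((hasDerivAt_id' x).mul (hf₁ x hx.le)).sub (hf x hx.le)).div
      (hasDerivAt_pow 2 x) (by positivity)).congr_deriv ?_
    simp only [Pi.sub_apply, Pi.mul_apply]
    field_simp
    ring
  refine concaveOn_of_hasDerivWithinAt2_nonpos (f' := fun x => (x * f₁ x - f x) / x ^ 2)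
    (f'' := fun x => (x ^ 2 * f₂ x - 2 * x * f₁ x + 2 * f x) / x ^ 3) (convex_Ioi 0)
    (fun x hx => (hdiv x hx).continuousAt.continuousWithinAt) ?_ ?_ ?_
  all_goals rw [interior_Ioi]; intro x (hx : 0 < x)
  · exact (hdiv x hx).hasDerivWithinAt
  · exact (hdiv' x hx).hasDerivWithinAt
  · exact div_nonpos_of_nonpos_of_nonneg
      (sq_mul_sub_two_mul_add_two_mul_nonpos hf hf₁ hf₂ h₀ hf₃ hx.le) (by positivity)

end DivSelf

section PowerMean

variable {a b : ℝ}

def logMeanRpow (a b p : ℝ) : ℝ := log ((a ^ p + b ^ p) / 2)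

theorem logMeanRpow_zero : logMeanRpow a b 0 = 0 := by
  norm_num [logMeanRpow]

variable (ha : 0 < a) (hb : 0 < b)
include ha hb

theorem hasDerivAt_logMeanRpow (p : ℝ) :
    HasDerivAt (logMeanRpow a b) ((a ^ p * log a + b ^ p * log b) / (a ^ p + b ^ p)) p := by
  have hsum := (hasStrictDerivAt_const_rpow ha p).hasDerivAt.add
    (hasStrictDerivAt_const_rpow hb p).hasDerivAt
  have hS : 0 < a ^ p + b ^ p := by positivity
  refine ((hsum.div_const 2).log (by simpa using hS.ne')).congr_deriv ?_
  simp only [Pi.add_apply]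
  field_simp

theorem hasDerivAt_deriv_logMeanRpow (p : ℝ) :
    HasDerivAt (fun p => (a ^ p * log a + b ^ p * log b) / (a ^ p + b ^ p))
      (a ^ p * b ^ p * (log a - log b) ^ 2 / (a ^ p + b ^ p) ^ 2) p := by
  have hA := (hasStrictDerivAt_const_rpow ha p).hasDerivAt
  have hB := (hasStrictDerivAt_const_rpow hb p).hasDerivAt
  have hS : 0 < a ^ p + b ^ p := by positivity
  refine (((hA.mul_const (log a)).add (hB.mul_const (log b))).div (hA.add hB)
    hS.ne').congr_deriv ?_
  simp only [Pi.add_apply]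
  field_simp
  ring

theorem hasDerivAt_deriv2_logMeanRpow (p : ℝ) :
    HasDerivAt (fun p => a ^ p * b ^ p * (log a - log b) ^ 2 / (a ^ p + b ^ p) ^ 2)
      (a ^ p * b ^ p * (log a - log b) ^ 3 * (b ^ p - a ^ p) / (a ^ p + b ^ p) ^ 3) p := by
  have hA := (hasStrictDerivAt_const_rpow ha p).hasDerivAt
  have hB := (hasStrictDerivAt_const_rpow hb p).hasDerivAt
  have hS : 0 < a ^ p + b ^ p := by positivity
  refine (((hA.mul hB).mul_const ((log a - log b) ^ 2)).div ((hA.add hB).pow 2)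
    (pow_ne_zero 2 hS.ne')).congr_deriv ?_
  simp only [Pi.add_apply, Pi.mul_apply, Pi.pow_apply]
  field_simp
  ring

theorem log_sub_log_mul_rpow_sub_rpow_nonpos {p : ℝ} (hp : 0 ≤ p) :
    (log a - log b) * (b ^ p - a ^ p) ≤ 0 := by
  rcases le_total a b with hab | hba
  · exact mul_nonpos_of_nonpos_of_nonneg (sub_nonpos.2 (log_le_log ha hab))
      (sub_nonneg.2 (rpow_le_rpow ha.le hab hp))
  · exact mul_nonpos_of_nonneg_of_nonpos (sub_nonneg.2 (log_le_log hb hba))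
      (sub_nonpos.2 (rpow_le_rpow hb.le hba hp))

theorem convexOn_logMeanRpow : ConvexOn ℝ (Ici 0) (logMeanRpow a b) := by
  refine (convexOn_of_hasDerivWithinAt2_nonneg convex_univ
    (fun p _ => (hasDerivAt_logMeanRpow ha hb p).continuousAt.continuousWithinAt)
    (fun p _ => (hasDerivAt_logMeanRpow ha hb p).hasDerivWithinAt)
    (fun p _ => (hasDerivAt_deriv_logMeanRpow ha hb p).hasDerivWithinAt)
    (fun p _ => by positivity)).subset (subset_univ _) (convex_Ici 0)

theorem concaveOn_logMeanRpow_div_self :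
    ConcaveOn ℝ (Ioi 0) (fun p => logMeanRpow a b p / p) := by
  refine concaveOn_div_self_of_deriv3_nonpos (fun p _ => hasDerivAt_logMeanRpow ha hb p)
    (fun p _ => hasDerivAt_deriv_logMeanRpow ha hb p)
    (fun p _ => hasDerivAt_deriv2_logMeanRpow ha hb p) logMeanRpow_zero fun p hp => ?_
  have hsign := log_sub_log_mul_rpow_sub_rpow_nonpos ha hb hp.le
  rw [show a ^ p * b ^ p * (log a - log b) ^ 3 * (b ^ p - a ^ p)
    = a ^ p * b ^ p * (log a - log b) ^ 2 * ((log a - log b) * (b ^ p - a ^ p)) by ring]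
  exact div_nonpos_of_nonpos_of_nonneg (mul_nonpos_of_nonneg_of_nonpos (by positivity) hsign)
    (by positivity)

theorem powerMean_pos (p : ℝ) : 0 < powerMean p a b := by
  unfold powerMean
  split_ifs <;> positivity

theorem log_powerMean {p : ℝ} (hp : p ≠ 0) :
    log (powerMean p a b) = logMeanRpow a b p / p := by
  rw [powerMean, if_neg hp, log_rpow (by positivity), logMeanRpow, one_div_mul_eq_div]

end PowerMean

theorem mul_le_sq_midpoint_of_concaveOn_log {s : Set ℝ} {g : ℝ → ℝ}
    (hg : ConcaveOn ℝ s (fun x => log (g x))) (hpos : ∀ x ∈ s, 0 < g x) {x y : ℝ}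
    (hx : x ∈ s) (hy : y ∈ s) : g x * g y ≤ g ((x + y) / 2) ^ 2 := by
  have hhalf : (1 / 2 : ℝ) • x + (1 / 2 : ℝ) • y = (x + y) / 2 := by
    simp only [smul_eq_mul]
    ring
  have hhalf_nonneg : (0 : ℝ) ≤ 1 / 2 := by norm_num
  have hmem : (x + y) / 2 ∈ s := hhalf ▸ hg.1 hx hy hhalf_nonneg hhalf_nonneg (by norm_num)
  have hmid := hg.2 hx hy hhalf_nonneg hhalf_nonneg (by norm_num)
  rw [hhalf, smul_eq_mul, smul_eq_mul] at hmid
  have hx' := hpos x hx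
  have hy' := hpos y hy
  have hm' := hpos _ hmem
  rw [← log_le_log_iff (by positivity) (by positivity), log_mul hx'.ne' hy'.ne', log_pow]
  push_cast
  linarith

theorem powerMean_monotone_logConcave_pos (a b : ℝ) (ha : 0 < a) (hb : 0 < b) :
    MonotoneOn (fun p => powerMean p a b) (Set.Ioi (0 : ℝ)) ∧
    ConcaveOn ℝ (Set.Ioi (0 : ℝ)) (fun p => Real.log (powerMean p a b)) ∧
    ∀ p q : ℝ, 0 < p → 0 < q →
      powerMean p a b * powerMean q a b ≤ powerMean ((p + q) / 2) a b ^ 2 := by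
  have hlog : EqOn (fun p => logMeanRpow a b p / p) (fun p => log (powerMean p a b)) (Ioi 0) :=
    fun p hp => (log_powerMean ha hb (ne_of_gt hp)).symm
  have hconc := (concaveOn_logMeanRpow_div_self ha hb).congr hlog
  have hmono := monotoneOn_div_self_of_convexOn (convexOn_logMeanRpow ha hb) logMeanRpow_zero
  refine ⟨?_, hconc, fun p q hp hq =>
    mul_le_sq_midpoint_of_concaveOn_log hconc (fun p _ => powerMean_pos ha hb p) hp hq⟩
  exact (exp_monotone.comp_monotoneOn (hmono.congr hlog)).congr
    fun p _ => exp_log (powerMean_pos ha hb p)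

end
end

section
/- Let a, b be real numbers with b > a > 0. Then the function p ↦ J_p(a,b) is strictly decreasing on (0,∞) and the function p ↦ log J_p(a,b) is convex on (0,∞). -/
/-!
Put `r = b / a > 1` and `h(p) = log (p (r ^ p - 1))`. Homogeneity gives
`log J_p(a,b) = log a + h(p+1) - h(p)`, so it suffices to study the forward difference of `h`.
Its derivative `h'(p+1) - h'(p)` is negative because `h'' < 0`, and its second derivative
`h''(p+1) - h''(p)` is nonnegative because `h''(p) = -1/p² - (log r)² (1/v + 1/v²)` with
`v = r ^ p - 1` increasing in `p`.
-/

noncomputable section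

open Real

open Set fwdDiff

section ForwardDifference

variable {f f' f'' : ℝ → ℝ} {c δ : ℝ}

theorem HasDerivAt.fwdDiff {x : ℝ} (hx : HasDerivAt f (f' x) x)
    (hxδ : HasDerivAt f (f' (x + δ)) (x + δ)) : HasDerivAt (Δ_[δ] f) (Δ_[δ] f' x) x :=
  (hxδ.comp_add_const x δ).sub hx

theorem hasDerivAt_fwdDiff_of_Ioi (hδ : 0 ≤ δ) (hf : ∀ x ∈ Ioi c, HasDerivAt f (f' x) x) :
    ∀ x ∈ Ioi c, HasDerivAt (Δ_[δ] f) (Δ_[δ] f' x) x := fun x hx =>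
  (hf x hx).fwdDiff (hf (x + δ) (by simp only [mem_Ioi] at hx ⊢; linarith))

theorem strictAntiOn_fwdDiff_of_hasDerivAt (hδ : 0 < δ)
    (hf : ∀ x ∈ Ioi c, HasDerivAt f (f' x) x) (hf' : StrictAntiOn f' (Ioi c)) :
    StrictAntiOn (Δ_[δ] f) (Ioi c) := by
  have hΔ := hasDerivAt_fwdDiff_of_Ioi hδ.le hf
  refine strictAntiOn_of_hasDerivWithinAt_neg (convex_Ioi c) (HasDerivAt.continuousOn hΔ)
    (fun x hx => (hΔ x (interior_subset hx)).hasDerivWithinAt) fun x hx => ?_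
  replace hx : c < x := interior_subset hx
  exact sub_neg.2 (hf' hx (show c < x + δ by linarith) (by linarith))

theorem convexOn_fwdDiff_of_hasDerivAt (hδ : 0 ≤ δ)
    (hf : ∀ x ∈ Ioi c, HasDerivAt f (f' x) x) (hf' : ∀ x ∈ Ioi c, HasDerivAt f' (f'' x) x)
    (hf'' : MonotoneOn f'' (Ioi c)) : ConvexOn ℝ (Ioi c) (Δ_[δ] f) := by
  have hΔ := hasDerivAt_fwdDiff_of_Ioi hδ hf
  have hΔ' := hasDerivAt_fwdDiff_of_Ioi hδ hf'
  refine convexOn_of_hasDerivWithinAt2_nonneg (convex_Ioi c) (HasDerivAt.continuousOn hΔ)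
    (fun x hx => (hΔ x (interior_subset hx)).hasDerivWithinAt)
    (fun x hx => (hΔ' x (interior_subset hx)).hasDerivWithinAt) fun x hx => ?_
  replace hx : c < x := interior_subset hx
  exact sub_nonneg.2 (hf'' hx (show c < x + δ by linarith) (by linarith))

end ForwardDifference

section Potential

variable {r p : ℝ}

def alzerPotential (r p : ℝ) : ℝ := log p + log (r ^ p - 1)

def alzerPotentialDeriv (r p : ℝ) : ℝ := p⁻¹ + r ^ p * log r / (r ^ p - 1)

def alzerPotentialDeriv2 (r p : ℝ) : ℝ :=
  -(p ^ 2)⁻¹ - log r ^ 2 * ((r ^ p - 1)⁻¹ + ((r ^ p - 1) ^ 2)⁻¹)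

theorem hasDerivAt_alzerPotential (hr : 1 < r) (hp : 0 < p) :
    HasDerivAt (alzerPotential r) (alzerPotentialDeriv r p) p :=
  (hasDerivAt_log hp.ne').add
    (((hasStrictDerivAt_const_rpow (by linarith) p).hasDerivAt.sub_const 1).log
      (sub_pos.2 (one_lt_rpow hr hp)).ne')

theorem hasDerivAt_alzerPotentialDeriv (hr : 1 < r) (hp : 0 < p) :
    HasDerivAt (alzerPotentialDeriv r) (alzerPotentialDeriv2 r p) p := by
  have hv : r ^ p - 1 ≠ 0 := (sub_pos.2 (one_lt_rpow hr hp)).ne'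
  have hrp := (hasStrictDerivAt_const_rpow (by linarith : 0 < r) p).hasDerivAt
  refine ((hasDerivAt_inv hp.ne').add
    ((hrp.mul_const (log r)).div (hrp.sub_const 1) hv)).congr_deriv ?_
  unfold alzerPotentialDeriv2
  field_simp
  ring

theorem alzerPotentialDeriv2_neg (hr : 1 < r) (hp : 0 < p) : alzerPotentialDeriv2 r p < 0 := by
  have hv : 0 < r ^ p - 1 := sub_pos.2 (one_lt_rpow hr hp)
  unfold alzerPotentialDeriv2
  have : 0 < (p ^ 2)⁻¹ := by positivity
  have : 0 ≤ log r ^ 2 * ((r ^ p - 1)⁻¹ + ((r ^ p - 1) ^ 2)⁻¹) := by positivity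
  linarith

theorem monotoneOn_alzerPotentialDeriv2 (hr : 1 < r) :
    MonotoneOn (alzerPotentialDeriv2 r) (Ioi 0) := by
  intro p (hp : 0 < p) q _ hpq
  have hvp : 0 < r ^ p - 1 := sub_pos.2 (one_lt_rpow hr hp)
  have hvpq : r ^ p - 1 ≤ r ^ q - 1 := sub_le_sub_right (rpow_le_rpow_of_exponent_le hr.le hpq) 1
  unfold alzerPotentialDeriv2
  gcongr

theorem strictAntiOn_alzerPotentialDeriv (hr : 1 < r) :
    StrictAntiOn (alzerPotentialDeriv r) (Ioi 0) :=
  strictAntiOn_of_hasDerivWithinAt_neg (convex_Ioi 0)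
    (HasDerivAt.continuousOn fun _ hp => hasDerivAt_alzerPotentialDeriv hr hp)
    (fun _ hp => (hasDerivAt_alzerPotentialDeriv hr (interior_subset hp)).hasDerivWithinAt)
    fun _ hp => alzerPotentialDeriv2_neg hr (interior_subset hp)

end Potential

section AlzerMean

variable {a b p : ℝ}

theorem alzerMean_eq_mul (ha : 0 < a) (hb : 0 ≤ b) (p : ℝ) :
    alzerMean p a b = a * ((p + 1) * ((b / a) ^ (p + 1) - 1) / (p * ((b / a) ^ p - 1))) := by
  obtain ⟨r, hr, rfl⟩ : ∃ r, 0 ≤ r ∧ b = a * r := ⟨b / a, div_nonneg hb ha.le, by field_simp⟩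
  have hap : a ^ p ≠ 0 := (rpow_pos_of_pos ha p).ne'
  rw [mul_div_cancel_left₀ r ha.ne', alzerMean, mul_rpow ha.le hr, mul_rpow ha.le hr,
    rpow_add_one ha.ne',
    show a ^ p * a - a ^ p * a * r ^ (p + 1) = a ^ p * (a * (1 - r ^ (p + 1))) by ring,
    show a ^ p - a ^ p * r ^ p = a ^ p * (1 - r ^ p) by ring, mul_div_mul_left _ _ hap,
    mul_div_mul_comm, ← neg_sub 1 (r ^ (p + 1)), ← neg_sub 1 (r ^ p), neg_div_neg_eq]
  ring

theorem alzerMean_pos (ha : 0 < a) (hab : a < b) (hp : 0 < p) : 0 < alzerMean p a b := by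
  have hr : 1 < b / a := (one_lt_div ha).2 hab
  have h0 : 0 < (b / a) ^ p - 1 := sub_pos.2 (one_lt_rpow hr hp)
  have h1 : 0 < (b / a) ^ (p + 1) - 1 := sub_pos.2 (one_lt_rpow hr (by linarith))
  rw [alzerMean_eq_mul ha (ha.trans hab).le]
  positivity

theorem log_alzerMean (ha : 0 < a) (hab : a < b) (hp : 0 < p) :
    log (alzerMean p a b) = Δ_[1] (alzerPotential (b / a)) p + log a := by
  have hr : 1 < b / a := (one_lt_div ha).2 hab
  have h0 : 0 < (b / a) ^ p - 1 := sub_pos.2 (one_lt_rpow hr hp)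
  have h1 : 0 < (b / a) ^ (p + 1) - 1 := sub_pos.2 (one_lt_rpow hr (by linarith))
  rw [alzerMean_eq_mul ha (ha.trans hab).le, log_mul ha.ne' (by positivity),
    log_div (by positivity) (by positivity), log_mul (by positivity) h1.ne',
    log_mul hp.ne' h0.ne', fwdDiff, alzerPotential, alzerPotential]
  ring

end AlzerMean

theorem alzerMean_strictAnti_logConvex (a b : ℝ) (ha : 0 < a) (hab : a < b) :
    StrictAntiOn (fun p => alzerMean p a b) (Set.Ioi (0 : ℝ)) ∧
    ConvexOn ℝ (Set.Ioi (0 : ℝ)) (fun p => Real.log (alzerMean p a b)) := by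
  have hr : 1 < b / a := (one_lt_div ha).2 hab
  have hpot : ∀ p ∈ Ioi (0 : ℝ), HasDerivAt (alzerPotential (b / a))
      (alzerPotentialDeriv (b / a) p) p := fun _ hp => hasDerivAt_alzerPotential hr hp
  have hanti := strictAntiOn_fwdDiff_of_hasDerivAt one_pos hpot
    (strictAntiOn_alzerPotentialDeriv hr)
  have hconv := convexOn_fwdDiff_of_hasDerivAt zero_le_one hpot
    (fun _ hp => hasDerivAt_alzerPotentialDeriv hr hp) (monotoneOn_alzerPotentialDeriv2 hr)
  refine ⟨fun p hp q hq hpq => ?_, (hconv.add_const (log a)).congr fun p hp => ?_⟩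
  · rw [← log_lt_log_iff (alzerMean_pos ha hab hq) (alzerMean_pos ha hab hp),
      log_alzerMean ha hab hp, log_alzerMean ha hab hq]
    exact add_lt_add_left (hanti hp hq hpq) _
  · exact (log_alzerMean ha hab hp).symm
end
end

section
/- Let a, b be real numbers with b > a > 0 and let p > 1. Then J_p(a,b)^2 ≤ J_{p+1}(a,b) · J_{p−1}(a,b). -/
noncomputable section

open Real

theorem alzerMean_sq_le (a b p : ℝ) (ha : 0 < a) (hab : a < b) (hp : 1 < p) :
    alzerMean p a b ^ 2 ≤ alzerMean (p + 1) a b * alzerMean (p - 1) a b := by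
  have hb : 0 < b := ha.trans hab
  obtain ⟨u, hudef⟩ : ∃ u, a ^ (p - 1) = u := ⟨_, rfl⟩
  obtain ⟨v, hvdef⟩ : ∃ v, b ^ (p - 1) = v := ⟨_, rfl⟩
  have hu : (0:ℝ) < u := hudef ▸ rpow_pos_of_pos ha _
  have hv : (0:ℝ) < v := hvdef ▸ rpow_pos_of_pos hb _
  have huv : u < v := by
    rw [← hudef, ← hvdef]; exact rpow_lt_rpow ha.le hab (by linarith)
  have hap : a ^ p = u * a := by
    have h := Real.rpow_add ha (p - 1) 1
    rw [Real.rpow_one, show p - 1 + 1 = p by ring, hudef] at h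
    exact h
  have hbp : b ^ p = v * b := by
    have h := Real.rpow_add hb (p - 1) 1
    rw [Real.rpow_one, show p - 1 + 1 = p by ring, hvdef] at h
    exact h
  have hap1 : a ^ (p + 1) = u * a * a := by
    rw [Real.rpow_add ha, Real.rpow_one, hap]
  have hbp1 : b ^ (p + 1) = v * b * b := by
    rw [Real.rpow_add hb, Real.rpow_one, hbp]
  have hap2 : a ^ (p + 1 + 1) = u * a * a * a := by
    rw [Real.rpow_add ha, Real.rpow_one, hap1]
  have hbp2 : b ^ (p + 1 + 1) = v * b * b * b := by
    rw [Real.rpow_add hb, Real.rpow_one, hbp1]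
  have hap0 : a ^ (p - 1 + 1) = u * a := by
    rw [show p - 1 + 1 = p by ring, hap]
  have hbp0 : b ^ (p - 1 + 1) = v * b := by
    rw [show p - 1 + 1 = p by ring, hbp]
  -- positivity of the differences
  have hX : u * a < v * b := mul_lt_mul'' huv hab hu.le ha.le
  have hY : u * a ^ 2 < v * b ^ 2 :=
    mul_lt_mul'' huv (pow_lt_pow_left₀ hab ha.le two_ne_zero) hu.le (by positivity)
  have hZ : u * a ^ 3 < v * b ^ 3 :=
    mul_lt_mul'' huv (pow_lt_pow_left₀ hab ha.le three_ne_zero) hu.le (by positivity)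
  have hX' : 0 < v * b - u * a := by linarith
  have hY' : 0 < v * b ^ 2 - u * a ^ 2 := by linarith
  have hZ' : 0 < v * b ^ 3 - u * a ^ 3 := by linarith
  have hW : 0 < v - u := by linarith
  have hp0 : (0:ℝ) < p := by linarith
  have hp1 : (0:ℝ) < p + 1 := by linarith
  have hp2 : (0:ℝ) < p + 2 := by linarith
  have hpm : (0:ℝ) < p - 1 := by linarith
  -- rewrite the Alzer means as ratios with positive numerators and denominators
  have h1 : alzerMean p a b = ((p + 1) * (v * b ^ 2 - u * a ^ 2)) / (p * (v * b - u * a)) := by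
    rw [alzerMean, hap1, hbp1, hap, hbp, div_mul_div_comm,
      div_eq_div_iff (by nlinarith) (by positivity)]
    ring
  have h2 : alzerMean (p + 1) a b
      = ((p + 2) * (v * b ^ 3 - u * a ^ 3)) / ((p + 1) * (v * b ^ 2 - u * a ^ 2)) := by
    rw [alzerMean, hap2, hbp2, hap1, hbp1, div_mul_div_comm,
      div_eq_div_iff (by nlinarith) (by positivity)]
    ring
  have h3 : alzerMean (p - 1) a b
      = (p * (v * b - u * a)) / ((p - 1) * (v - u)) := by
    rw [alzerMean, hap0, hbp0, hudef, hvdef, div_mul_div_comm,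
      div_eq_div_iff (by nlinarith) (by positivity)]
    ring
  rw [h1, h2, h3, div_pow, div_mul_div_comm,
    div_le_div_iff₀ (by positivity) (by positivity)]
  -- key algebraic identity and coefficient inequality
  have hkey : (v * b ^ 3 - u * a ^ 3) * (v * b - u * a) ^ 3
      - (v * b ^ 2 - u * a ^ 2) ^ 3 * (v - u)
      = u * v * (b - a) ^ 3 * (v ^ 2 * b ^ 3 - u ^ 2 * a ^ 3) := by ring
  have hvb : 0 ≤ v ^ 2 * b ^ 3 - u ^ 2 * a ^ 3 := by
    have h1 : u ^ 2 * a ^ 3 ≤ v ^ 2 * b ^ 3 :=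
      mul_le_mul (pow_le_pow_left₀ hu.le huv.le 2) (pow_le_pow_left₀ ha.le hab.le 3)
        (by positivity) (by positivity)
    linarith
  have hprod : 0 ≤ u * v * (b - a) ^ 3 * (v ^ 2 * b ^ 3 - u ^ 2 * a ^ 3) :=
    mul_nonneg (mul_nonneg (mul_nonneg hu.le hv.le) (pow_nonneg (by linarith) 3)) hvb
  have hYZ : (v * b ^ 2 - u * a ^ 2) ^ 3 * (v - u)
      ≤ (v * b ^ 3 - u * a ^ 3) * (v * b - u * a) ^ 3 := by linarith [hkey, hprod]
  have hcoef : (p + 1) ^ 3 * (p - 1) ≤ (p + 2) * p ^ 3 := by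
    have h : (p + 2) * p ^ 3 - (p + 1) ^ 3 * (p - 1) = 2 * p + 1 := by ring
    linarith
  calc ((p + 1) * (v * b ^ 2 - u * a ^ 2)) ^ 2
        * ((p + 1) * (v * b ^ 2 - u * a ^ 2) * ((p - 1) * (v - u)))
      = ((p + 1) ^ 3 * (p - 1)) * ((v * b ^ 2 - u * a ^ 2) ^ 3 * (v - u)) := by ring
    _ ≤ ((p + 2) * p ^ 3) * ((v * b ^ 2 - u * a ^ 2) ^ 3 * (v - u)) := by
        apply mul_le_mul_of_nonneg_right hcoef; positivity
    _ ≤ ((p + 2) * p ^ 3) * ((v * b ^ 3 - u * a ^ 3) * (v * b - u * a) ^ 3) := by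
        apply mul_le_mul_of_nonneg_left hYZ; positivity
    _ = (p + 2) * (v * b ^ 3 - u * a ^ 3) * (p * (v * b - u * a))
        * (p * (v * b - u * a)) ^ 2 := by ring
end
end

section
/- Let a, b be positive real numbers. Then the function p ↦ M_p(a,b) is concave on the interval [1,∞) and convex on the interval (−∞,−1]; moreover, for a ≠ b these concavity/convexity properties are strict (the second derivative inequality is strict), i.e. ∂²/∂p² M_p(a,b) ≤ 0 for p ≥ 1 and ∂²/∂p² M_p(a,b) ≥ 0 for p ≤ −1, with equality if and only if a = b. -/
noncomputable section

open Real

/-!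
With `μ = (log a + log b) / 2` and `δ = (log a - log b) / 2` one has
`(a ^ t + b ^ t) / 2 = exp (μ t) cosh (δ t)`, so `M_t(a,b) = exp (μ + h t)` with
`h t = L (δ t) / t`, `L = log ∘ cosh`. Putting `v = δ t`, `h' t = B v / t ^ 2` and
`h'' t = A v / t ^ 3`, where `B v = v L' v - L v` and `A v = v ^ 2 L'' v - 2 B v`; hence
`M'' = M (h'' + h' ^ 2) = M (t A v + (B v) ^ 2) / t ^ 4`.

Both `-A` and `-A - B ^ 2` are even, vanish at `0` and increase strictly on `[0, ∞)`, so
`A v < 0` and `A v + (B v) ^ 2 < 0` for `v ≠ 0`. Then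
`t A + B ^ 2 = (t - 1) A + (A + B ^ 2) < 0` for `t ≥ 1`,
and `t A + B ^ 2 ≥ -A > 0` for `t ≤ -1`. For `a = b` the mean does not depend on `t`.
-/

open Filter Topology Set

theorem Function.Even.pos_of_hasDerivAt_pos {f f' : ℝ → ℝ} (hf : Function.Even f)
    (h0 : f 0 = 0) (hderiv : ∀ x, HasDerivAt f (f' x) x) (hpos : ∀ x, 0 < x → 0 < f' x)
    {x : ℝ} (hx : x ≠ 0) : 0 < f x := by
  have hmono : StrictMonoOn f (Ici 0) := by
    refine strictMonoOn_of_hasDerivWithinAt_pos (convex_Ici 0)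
      (fun y _ => (hderiv y).continuousAt.continuousWithinAt)
      (fun y _ => (hderiv y).hasDerivWithinAt) ?_
    rw [interior_Ici]
    exact hpos
  have hpos_of_pos : ∀ y, 0 < y → 0 < f y := fun y hy =>
    h0 ▸ hmono self_mem_Ici (mem_Ici.2 hy.le) hy
  rcases hx.lt_or_gt with hneg | hpos'
  · simpa only [hf x] using hpos_of_pos (-x) (neg_pos.2 hneg)
  · exact hpos_of_pos x hpos'

section LogCosh

def logCoshB (v : ℝ) : ℝ := v * sinh v / cosh v - log (cosh v)

def logCoshA (v : ℝ) : ℝ := v ^ 2 / cosh v ^ 2 - 2 * logCoshB v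

theorem hasDerivAt_log_cosh (v : ℝ) : HasDerivAt (fun v => log (cosh v)) (sinh v / cosh v) v :=
  (hasDerivAt_cosh v).log (cosh_pos v).ne'

theorem hasDerivAt_logCoshB (v : ℝ) : HasDerivAt logCoshB (v / cosh v ^ 2) v := by
  have hquot : HasDerivAt (fun v => v * sinh v / cosh v)
      (((1 * sinh v + v * cosh v) * cosh v - v * sinh v * sinh v) / cosh v ^ 2) v :=
    ((hasDerivAt_id v).fun_mul (hasDerivAt_sinh v)).fun_div (hasDerivAt_cosh v) (cosh_pos v).ne'
  refine (hquot.sub (hasDerivAt_log_cosh v)).congr_deriv ?_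
  have hc := (cosh_pos v).ne'
  field_simp
  linear_combination v * cosh_sq_sub_sinh_sq v

theorem hasDerivAt_logCoshA (v : ℝ) :
    HasDerivAt logCoshA (-(2 * v ^ 2 * sinh v / cosh v ^ 3)) v := by
  have hquot := ((hasDerivAt_pow 2 v).fun_div ((hasDerivAt_cosh v).fun_pow 2)
    (pow_ne_zero 2 (cosh_pos v).ne'))
  refine (hquot.sub ((hasDerivAt_logCoshB v).const_mul 2)).congr_deriv ?_
  have hc := (cosh_pos v).ne'
  field_simp
  ring

theorem logCoshB_neg (v : ℝ) : logCoshB (-v) = logCoshB v := by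
  simp only [logCoshB, cosh_neg, sinh_neg]
  ring

theorem logCoshA_neg (v : ℝ) : logCoshA (-v) = logCoshA v := by
  simp only [logCoshA, cosh_neg, logCoshB_neg, even_two, Even.neg_pow]

theorem logCoshA_lt_zero {v : ℝ} (hv : v ≠ 0) : logCoshA v < 0 := by
  have hpos : 0 < -logCoshA v := by
    refine Function.Even.pos_of_hasDerivAt_pos (f := fun v => -logCoshA v)
      (fun v => by simp only [logCoshA_neg])
      (by simp [logCoshA, logCoshB]) (fun v => (hasDerivAt_logCoshA v).neg) (fun v hv => ?_) hv
    rw [neg_neg]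
    have := sinh_pos_iff.2 hv
    positivity
  linarith

theorem logCoshB_sq_add_logCoshA_lt_zero {v : ℝ} (hv : v ≠ 0) :
    logCoshB v ^ 2 + logCoshA v < 0 := by
  have hderiv (v : ℝ) : HasDerivAt (fun v => -logCoshA v - logCoshB v ^ 2)
      (2 * v / cosh v ^ 2 * log (cosh v)) v := by
    refine ((hasDerivAt_logCoshA v).neg.sub ((hasDerivAt_logCoshB v).fun_pow 2)).congr_deriv ?_
    have hc := (cosh_pos v).ne'
    simp only [logCoshB, Nat.cast_ofNat, Nat.add_one_sub_one, pow_one]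
    field_simp
    ring
  have hpos : 0 < -logCoshA v - logCoshB v ^ 2 := by
    refine Function.Even.pos_of_hasDerivAt_pos (f := fun v => -logCoshA v - logCoshB v ^ 2)
      (fun v => by simp only [logCoshA_neg, logCoshB_neg])
      (by simp [logCoshA, logCoshB]) hderiv (fun v hv => ?_) hv
    have := log_pos (one_lt_cosh.2 hv.ne')
    positivity
  linarith

theorem mul_logCoshA_add_logCoshB_sq_neg {t v : ℝ} (ht : 1 ≤ t) (hv : v ≠ 0) :
    t * logCoshA v + logCoshB v ^ 2 < 0 := by
  nlinarith [logCoshA_lt_zero hv, logCoshB_sq_add_logCoshA_lt_zero hv]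

theorem mul_logCoshA_add_logCoshB_sq_pos {t v : ℝ} (ht : t ≤ -1) (hv : v ≠ 0) :
    0 < t * logCoshA v + logCoshB v ^ 2 := by
  nlinarith [logCoshA_lt_zero hv, sq_nonneg (logCoshB v)]

end LogCosh

section CoshPowerMean

variable (μ δ : ℝ)

def coshPowerMean (t : ℝ) : ℝ := exp (μ + log (cosh (δ * t)) / t)

theorem coshPowerMean_pos (t : ℝ) : 0 < coshPowerMean μ δ t := exp_pos _

variable {μ δ}

theorem hasDerivAt_coshPowerMean {t : ℝ} (ht : t ≠ 0) :
    HasDerivAt (coshPowerMean μ δ) (coshPowerMean μ δ t * logCoshB (δ * t) / t ^ 2) t := by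
  have hlog : HasDerivAt (fun t => log (cosh (δ * t))) (sinh (δ * t) / cosh (δ * t) * δ) t :=
    (hasDerivAt_log_cosh (δ * t)).comp t (hasDerivAt_const_mul δ)
  refine ((hlog.div (hasDerivAt_id t) ht).const_add μ).exp.congr_deriv ?_
  have hc := (cosh_pos (δ * t)).ne'
  simp only [coshPowerMean, logCoshB, Pi.div_apply, id]
  ring

theorem hasDerivAt_deriv_coshPowerMean {t : ℝ} (ht : t ≠ 0) :
    HasDerivAt (deriv (coshPowerMean μ δ))
      (coshPowerMean μ δ t * (t * logCoshA (δ * t) + logCoshB (δ * t) ^ 2) / t ^ 4) t := by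
  have hB : HasDerivAt (fun t => logCoshB (δ * t)) (δ * t / cosh (δ * t) ^ 2 * δ) t :=
    (hasDerivAt_logCoshB (δ * t)).comp t (hasDerivAt_const_mul δ)
  have hderiv := ((hasDerivAt_coshPowerMean (μ := μ) (δ := δ) ht).fun_mul hB).fun_div
    (hasDerivAt_pow 2 t) (pow_ne_zero 2 ht)
  refine (hderiv.congr_deriv ?_).congr_of_eventuallyEq ?_
  · have hc := (cosh_pos (δ * t)).ne'
    simp only [logCoshA, Nat.cast_ofNat]
    field_simp
    ring
  · filter_upwards [compl_singleton_mem_nhds ht] with s hs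
    exact (hasDerivAt_coshPowerMean hs).deriv

theorem iteratedDeriv_two_coshPowerMean {t : ℝ} (ht : t ≠ 0) :
    iteratedDeriv 2 (coshPowerMean μ δ) t =
      coshPowerMean μ δ t * (t * logCoshA (δ * t) + logCoshB (δ * t) ^ 2) / t ^ 4 := by
  rw [iteratedDeriv_succ, iteratedDeriv_one]
  exact (hasDerivAt_deriv_coshPowerMean ht).deriv

end CoshPowerMean

section PowerMean

variable {a b : ℝ}

theorem powerMean_self (ha : 0 ≤ a) (t : ℝ) : powerMean t a a = a := by
  rcases eq_or_ne t 0 with rfl | ht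
  · simp [powerMean, sqrt_mul_self ha]
  · simp [powerMean, ht, rpow_rpow_inv ha ht]

theorem powerMean_eq_coshPowerMean (ha : 0 < a) (hb : 0 < b) {t : ℝ} (ht : t ≠ 0) :
    powerMean t a b = coshPowerMean ((log a + log b) / 2) ((log a - log b) / 2) t := by
  have hsum : (a ^ t + b ^ t) / 2 =
      exp ((log a + log b) / 2 * t) * cosh ((log a - log b) / 2 * t) := by
    rw [rpow_def_of_pos ha, rpow_def_of_pos hb, cosh_eq, mul_div_assoc', mul_add, ← exp_add,
      ← exp_add]
    ring_nf
  rw [powerMean, if_neg ht, hsum, rpow_def_of_pos (by positivity),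
    log_mul (exp_pos _).ne' (cosh_pos _).ne', log_exp, coshPowerMean]
  congr 1
  field_simp

theorem powerMean_eventuallyEq_coshPowerMean (ha : 0 < a) (hb : 0 < b) {p : ℝ} (hp : p ≠ 0) :
    (fun t => powerMean t a b) =ᶠ[𝓝 p]
      coshPowerMean ((log a + log b) / 2) ((log a - log b) / 2) := by
  filter_upwards [compl_singleton_mem_nhds hp] with t ht
  exact powerMean_eq_coshPowerMean ha hb ht

theorem continuousAt_powerMean (ha : 0 < a) (hb : 0 < b) {p : ℝ} (hp : p ≠ 0) :
    ContinuousAt (fun t => powerMean t a b) p :=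
  (hasDerivAt_coshPowerMean hp).continuousAt.congr
    (powerMean_eventuallyEq_coshPowerMean ha hb hp).symm

theorem iteratedDeriv_two_powerMean (ha : 0 < a) (hb : 0 < b) {p : ℝ} (hp : p ≠ 0) :
    iteratedDeriv 2 (fun t => powerMean t a b) p =
      coshPowerMean ((log a + log b) / 2) ((log a - log b) / 2) p *
        (p * logCoshA ((log a - log b) / 2 * p) + logCoshB ((log a - log b) / 2 * p) ^ 2) /
          p ^ 4 := by
  rw [(powerMean_eventuallyEq_coshPowerMean ha hb hp).iteratedDeriv_eq,
    iteratedDeriv_two_coshPowerMean hp]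

theorem log_sub_log_div_two_mul_ne_zero (ha : 0 < a) (hb : 0 < b) (hab : a ≠ b) {p : ℝ}
    (hp : p ≠ 0) : (log a - log b) / 2 * p ≠ 0 := by
  refine mul_ne_zero (fun h => hab (log_injOn_pos ha hb ?_)) hp
  linarith

theorem iteratedDeriv_two_powerMean_neg (ha : 0 < a) (hb : 0 < b) (hab : a ≠ b) {p : ℝ}
    (hp : 1 ≤ p) : iteratedDeriv 2 (fun t => powerMean t a b) p < 0 := by
  have hp0 : p ≠ 0 := by positivity
  rw [iteratedDeriv_two_powerMean ha hb hp0]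
  exact div_neg_of_neg_of_pos (mul_neg_of_pos_of_neg (coshPowerMean_pos _ _ _)
    (mul_logCoshA_add_logCoshB_sq_neg hp (log_sub_log_div_two_mul_ne_zero ha hb hab hp0)))
    (by positivity)

theorem iteratedDeriv_two_powerMean_pos (ha : 0 < a) (hb : 0 < b) (hab : a ≠ b) {p : ℝ}
    (hp : p ≤ -1) : 0 < iteratedDeriv 2 (fun t => powerMean t a b) p := by
  have hp0 : p ≠ 0 := by linarith
  rw [iteratedDeriv_two_powerMean ha hb hp0]
  exact div_pos (mul_pos (coshPowerMean_pos _ _ _)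
    (mul_logCoshA_add_logCoshB_sq_pos hp (log_sub_log_div_two_mul_ne_zero ha hb hab hp0)))
    (by positivity)

end PowerMean

theorem powerMean_concave_convex_in_order (a b : ℝ) (ha : 0 < a) (hb : 0 < b) :
    ConcaveOn ℝ (Set.Ici (1 : ℝ)) (fun p => powerMean p a b) ∧
    ConvexOn ℝ (Set.Iic (-1 : ℝ)) (fun p => powerMean p a b) ∧
    (∀ p : ℝ, 1 ≤ p → iteratedDeriv 2 (fun t => powerMean t a b) p ≤ 0) ∧
    (∀ p : ℝ, p ≤ -1 → 0 ≤ iteratedDeriv 2 (fun t => powerMean t a b) p) ∧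
    (∀ p : ℝ, (1 ≤ p ∨ p ≤ -1) →
      (iteratedDeriv 2 (fun t => powerMean t a b) p = 0 ↔ a = b)) := by
  rcases eq_or_ne a b with rfl | hab
  · have hconst : (fun t => powerMean t a a) = fun _ => a := funext (powerMean_self ha.le)
    simp only [hconst, iteratedDeriv_const]
    exact ⟨concaveOn_const _ (convex_Ici 1), convexOn_const _ (convex_Iic (-1)),
      by norm_num, by norm_num, by norm_num⟩
  have hneg p (hp : 1 ≤ p) := iteratedDeriv_two_powerMean_neg ha hb hab hp
  have hpos p (hp : p ≤ -1) := iteratedDeriv_two_powerMean_pos ha hb hab hp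
  have hcont {s : Set ℝ} (hs : (0 : ℝ) ∉ s) : ContinuousOn (fun t => powerMean t a b) s :=
    fun p hp => (continuousAt_powerMean ha hb (ne_of_mem_of_not_mem hp hs)).continuousWithinAt
  refine ⟨?_, ?_, fun p hp => (hneg p hp).le, fun p hp => (hpos p hp).le, ?_⟩
  · refine (strictConcaveOn_of_deriv2_neg (convex_Ici 1) (hcont (by norm_num)) ?_).concaveOn
    rw [interior_Ici]
    exact fun p hp => by rw [← iteratedDeriv_eq_iterate]; exact hneg p (le_of_lt hp)
  · refine (strictConvexOn_of_deriv2_pos (convex_Iic (-1)) (hcont (by norm_num)) ?_).convexOn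
    rw [interior_Iic]
    exact fun p hp => by rw [← iteratedDeriv_eq_iterate]; exact hpos p (le_of_lt hp)
  · rintro p (hp | hp)
    · exact iff_of_false (hneg p hp).ne hab
    · exact iff_of_false (hpos p hp).ne' hab
end
end
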